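/- arXiv:1504.04385 — 2 statements merged into one kernel-verified Lean document; each statement's English description precedes it below -/
import Mathlib

section
/- The minimal polynomial of L is μ(λ) = λ·(λ + γ₁+γ₂)·(λ + ½(γ₁+γ₂)), which has degree 3. In particular, L satisfies no nonzero polynomial of degree ≤ 2. -/
open Matrix Polynomial

noncomputable def laserL (γ₁ γ₂ : ℝ) : Matrix (Fin 9) (Fin 9) ℝ :=
  Matrix.of fun i j =>
    if i = 0 ∧ j = 4 then γ₁
    else if i = 8 ∧ j = 4 then γ₂
    else if i = 4 ∧ j = 4 then -(γ₁ + γ₂)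
    else if i = j ∧ (i = 1 ∨ i = 3 ∨ i = 5 ∨ i = 7) then -(1/2) * (γ₁ + γ₂)
    else 0

noncomputable def auxQ (γ₁ γ₂ : ℝ) : Matrix (Fin 9) (Fin 9) ℝ :=
  Matrix.of fun i j =>
    if i = j ∧ (i = 1 ∨ i = 3 ∨ i = 5 ∨ i = 7) then -((γ₁ + γ₂)^2/4) else 0

set_option maxHeartbeats 1000000 in
lemma laser_step1 (γ₁ γ₂ : ℝ) :
    laserL γ₁ γ₂ * (laserL γ₁ γ₂ + (γ₁ + γ₂) • 1) = auxQ γ₁ γ₂ := by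
  ext i j
  fin_cases i <;> fin_cases j <;>
    simp [laserL, auxQ, Matrix.mul_apply, Fin.sum_univ_succ, Matrix.one_apply] <;>
    first | ring1 | (ring_nf; tauto)

set_option maxHeartbeats 1000000 in
lemma laser_step2 (γ₁ γ₂ : ℝ) :
    auxQ γ₁ γ₂ * (laserL γ₁ γ₂ + ((1/2) * (γ₁ + γ₂)) • 1) = 0 := by
  ext i j
  fin_cases i <;> fin_cases j <;>
    simp [laserL, auxQ, Matrix.mul_apply, Fin.sum_univ_succ, Matrix.one_apply] <;>
    first | ring1 | (ring_nf; tauto)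

lemma laser_annih (γ₁ γ₂ : ℝ) :
    aeval (laserL γ₁ γ₂) (X * (X + C (γ₁ + γ₂)) * (X + C ((1/2) * (γ₁ + γ₂)))) = 0 := by
  have h1 := laser_step1 γ₁ γ₂
  have h2 := laser_step2 γ₁ γ₂
  rw [_root_.map_mul, _root_.map_mul, aeval_add, aeval_add, aeval_X, aeval_C, aeval_C,
    Algebra.algebraMap_eq_smul_one, Algebra.algebraMap_eq_smul_one, h1, h2]

set_option maxHeartbeats 1000000 in
lemma laser_sq (γ₁ γ₂ : ℝ) :
    (laserL γ₁ γ₂ ^ 2) 1 1 = (γ₁ + γ₂)^2/4 ∧ (laserL γ₁ γ₂ ^ 2) 2 2 = 0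
      ∧ (laserL γ₁ γ₂ ^ 2) 4 4 = (γ₁ + γ₂)^2 := by
  rw [pow_two]
  refine ⟨?_, ?_, ?_⟩ <;>
    simp (config := { decide := true }) [laserL, Matrix.mul_apply, Fin.sum_univ_succ] <;> ring

lemma laser_entries (γ₁ γ₂ : ℝ) :
    laserL γ₁ γ₂ 1 1 = -(1/2) * (γ₁ + γ₂) ∧ laserL γ₁ γ₂ 2 2 = 0
      ∧ laserL γ₁ γ₂ 4 4 = -(γ₁ + γ₂) := by
  refine ⟨?_, ?_, ?_⟩ <;> simp [laserL]

lemma laser_min (γ₁ γ₂ : ℝ) (h₁ : 0 < γ₁) (h₂ : 0 < γ₂) (q : ℝ[X])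
    (hdeg : q.natDegree ≤ 2) (hq : aeval (laserL γ₁ γ₂) q = 0) : q = 0 := by
  have hsum := Polynomial.aeval_eq_sum_range' (show q.natDegree < 3 by omega) (laserL γ₁ γ₂)
  rw [hq] at hsum
  have hsum' : q.coeff 0 • (1 : Matrix (Fin 9) (Fin 9) ℝ) + q.coeff 1 • laserL γ₁ γ₂
      + q.coeff 2 • laserL γ₁ γ₂ ^ 2 = 0 := by
    have := hsum.symm
    rwa [Finset.sum_range_succ, Finset.sum_range_succ, Finset.sum_range_one,
      pow_zero, pow_one] at this
  have ha0 : (0:ℝ) < γ₁ + γ₂ := by positivity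
  have entry : ∀ i : Fin 9,
      q.coeff 0 * (1 : Matrix (Fin 9) (Fin 9) ℝ) i i + q.coeff 1 * laserL γ₁ γ₂ i i
        + q.coeff 2 * (laserL γ₁ γ₂ ^ 2) i i = 0 := by
    intro i
    have := congrFun (congrFun hsum' i) i
    simpa [Matrix.add_apply, Matrix.smul_apply, smul_eq_mul] using this
  obtain ⟨s1, s2, s4⟩ := laser_sq γ₁ γ₂
  obtain ⟨l1, l2, l4⟩ := laser_entries γ₁ γ₂
  have e1 := entry 1
  have e2 := entry 2
  have e4 := entry 4
  rw [s1, l1, Matrix.one_apply_eq] at e1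
  rw [s2, l2, Matrix.one_apply_eq] at e2
  rw [s4, l4, Matrix.one_apply_eq] at e4
  -- e2 : c0 = 0, e1 : c0 - c1 (a/2) + c2 a²/4 = 0, e4 : c0 - c1 a + c2 a² = 0
  have hc2 : q.coeff 2 = 0 := by
    have h : q.coeff 2 * ((γ₁ + γ₂)^2/2) = 0 := by linear_combination e4 - 2 * e1 + e2
    have hne : ((γ₁ + γ₂)^2/2 : ℝ) ≠ 0 := by positivity
    exact (mul_eq_zero.mp h).resolve_right hne
  have hc1 : q.coeff 1 = 0 := by
    have h : q.coeff 1 * (γ₁ + γ₂) = 0 := by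
      linear_combination (-2) * e1 + 2 * e2 + ((γ₁ + γ₂)^2/2) * hc2
    exact (mul_eq_zero.mp h).resolve_right ha0.ne'
  have hc0 : q.coeff 0 = 0 := by linear_combination e2
  ext n
  rcases Nat.lt_or_ge n 3 with hn | hn
  · interval_cases n <;> simp [hc0, hc1, hc2]
  · have : q.natDegree < n := by omega
    simp [q.coeff_eq_zero_of_natDegree_lt this]

theorem stmt7 (γ₁ γ₂ : ℝ) (h₁ : 0 < γ₁) (h₂ : 0 < γ₂) :
    minpoly ℝ (laserL γ₁ γ₂)
        = X * (X + C (γ₁ + γ₂)) * (X + C ((1/2) * (γ₁ + γ₂)))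
      ∧ (minpoly ℝ (laserL γ₁ γ₂)).natDegree = 3
      ∧ ∀ p : ℝ[X], p ≠ 0 → p.natDegree ≤ 2 → Polynomial.aeval (laserL γ₁ γ₂) p ≠ 0 := by
  set p : ℝ[X] := X * (X + C (γ₁ + γ₂)) * (X + C ((1/2) * (γ₁ + γ₂))) with hp
  have hmon : p.Monic := (monic_X.mul (monic_X_add_C _)).mul (monic_X_add_C _)
  have hpdeg : p.natDegree = 3 := by
    rw [hp]; compute_degree!
  have hann : aeval (laserL γ₁ γ₂) p = 0 := laser_annih γ₁ γ₂
  have hmain : minpoly ℝ (laserL γ₁ γ₂) = p := by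
    symm
    apply minpoly.unique
    · exact hmon
    · exact hann
    · intro q hqm hq0
      have hq3 : 3 ≤ q.natDegree := by
        by_contra h
        exact hqm.ne_zero (laser_min γ₁ γ₂ h₁ h₂ q (by omega) hq0)
      calc p.degree = (3 : ℕ) := by rw [degree_eq_natDegree hmon.ne_zero, hpdeg]
        _ ≤ (q.natDegree : WithBot ℕ) := by exact_mod_cast hq3
        _ = q.degree := (degree_eq_natDegree hqm.ne_zero).symm
  refine ⟨hmain, by rw [hmain, hpdeg], ?_⟩
  intro r hr hrdeg hr0
  exact hr (laser_min γ₁ γ₂ h₁ h₂ r hrdeg hr0)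
end

section
/- The matrix exponential of tL maps the vectorized 5th coordinate according to: (exp(tL))(0,4) = (γ₁/(γ₁+γ₂))(1 - e^{-(γ₁+γ₂)t}), (exp(tL))(8,4) = (γ₂/(γ₁+γ₂))(1 - e^{-(γ₁+γ₂)t}), (exp(tL))(4,4) = e^{-(γ₁+γ₂)t}, (exp(tL))(i,i) = e^{-½(γ₁+γ₂)t} for i ∈ {1,3,5,7}, (exp(tL))(i,i) = 1 for i ∈ {0,2,6,8}, and all other entries are 0. -/
/-!
`t • laserL γ₁ γ₂ = -(γ₁ + γ₂) t • P - ½ (γ₁ + γ₂) t • Q` is a spectral decomposition: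
`P = u e₄ᵀ`, with `u = (-γ₁/(γ₁+γ₂), 0, 0, 0, 1, 0, 0, 0, -γ₂/(γ₁+γ₂))` the decaying
eigenvector and `e₄ᵀ u = 1`, is a rank-one projection, `Q` is the coordinate projection onto
the coherences `1, 3, 5, 7`, and `P`, `Q` are orthogonal idempotents. For a complete family of
orthogonal idempotents `eᵢ` the map `x ↦ ∑ xᵢ • eᵢ` is a continuous algebra homomorphism out of
`ι → ℝ`, so it commutes with `exp`; completing `P, Q` by `1 - P - Q` this gives
`exp (t L) = 1 + (e^{-(γ₁+γ₂)t} - 1) • P + (e^{-(γ₁+γ₂)t/2} - 1) • Q`, whose entries are the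
claimed ones.
-/

open Matrix

open NormedSpace

lemma OrthogonalIdempotents.pair_iff {R : Type*} [Semiring R] {x y : R} :
    OrthogonalIdempotents ![x, y] ↔
      IsIdempotentElem x ∧ IsIdempotentElem y ∧ x * y = 0 ∧ y * x = 0 := by
  simp [orthogonalIdempotents_iff, Pairwise, Fin.forall_fin_two, and_assoc]

section ExpIdempotents

variable {ι A : Type*} [Fintype ι] [NormedRing A] [NormedAlgebra ℝ A] [Algebra ℚ A]
  {e : ι → A}

noncomputable def CompleteOrthogonalIdempotents.linearCombinationAlgHom
    (he : CompleteOrthogonalIdempotents e) : (ι → ℝ) →ₐ[ℝ] A :=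
  AlgHom.ofLinearMap (Fintype.linearCombination ℝ e)
    (by simp [Fintype.linearCombination_apply, he.complete])
    (fun x y => by
      classical
      simp [Fintype.linearCombination_apply, Finset.sum_mul_sum, he.mul_eq, smul_ite,
        smul_smul, mul_comm])

theorem CompleteOrthogonalIdempotents.exp_sum_smul (he : CompleteOrthogonalIdempotents e)
    (c : ι → ℝ) : exp (∑ i, c i • e i) = ∑ i, Real.exp (c i) • e i := by
  have := map_exp he.linearCombinationAlgHom
    (LinearMap.continuous_of_finiteDimensional (Fintype.linearCombination ℝ e)) c
  simpa [linearCombinationAlgHom, Fintype.linearCombination_apply, Pi.exp_def,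
    Real.exp_eq_exp_ℝ] using this.symm

theorem OrthogonalIdempotents.exp_sum_smul (he : OrthogonalIdempotents e) (c : ι → ℝ) :
    exp (∑ i, c i • e i) = 1 + ∑ i, (Real.exp (c i) - 1) • e i := by
  have := (CompleteOrthogonalIdempotents.option he).exp_sum_smul (Option.elim · 0 c)
  simp only [Fintype.sum_option, Option.elim_none, Option.elim_some, zero_smul, zero_add,
    Real.exp_zero, one_smul] at this
  simp only [this, sub_smul, one_smul, Finset.sum_sub_distrib]
  abel

end ExpIdempotents

theorem Matrix.isIdempotentElem_vecMulVec {m R : Type*} [Fintype m] [CommSemiring R]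
    {u v : m → R} (h : v ⬝ᵥ u = 1) : IsIdempotentElem (vecMulVec u v) := by
  rw [IsIdempotentElem, vecMulVec_mul_vecMulVec, h, one_smul]

namespace Laser

noncomputable def decayVec (γ₁ γ₂ : ℝ) : Fin 9 → ℝ :=
  ![-(γ₁ / (γ₁ + γ₂)), 0, 0, 0, 1, 0, 0, 0, -(γ₂ / (γ₁ + γ₂))]

def coherenceMask : Fin 9 → ℝ := ![0, 1, 0, 1, 0, 1, 0, 1, 0]

noncomputable def decayProj (γ₁ γ₂ : ℝ) : Matrix (Fin 9) (Fin 9) ℝ :=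
  vecMulVec (decayVec γ₁ γ₂) (Pi.single 4 1)

def coherenceProj : Matrix (Fin 9) (Fin 9) ℝ := diagonal coherenceMask

theorem orthogonalIdempotents_decayProj_coherenceProj (γ₁ γ₂ : ℝ) :
    OrthogonalIdempotents ![decayProj γ₁ γ₂, coherenceProj] := by
  have hP : IsIdempotentElem (decayProj γ₁ γ₂) :=
    isIdempotentElem_vecMulVec (by simp [decayVec])
  have hmask : IsIdempotentElem coherenceMask := by
    ext i; fin_cases i <;> simp [coherenceMask]
  have hPQ : Pi.single 4 1 ᵥ* diagonal coherenceMask = 0 := by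
    ext j; fin_cases j <;> simp [vecMul_diagonal, coherenceMask]
  have hQP : diagonal coherenceMask *ᵥ decayVec γ₁ γ₂ = 0 := by
    ext i; fin_cases i <;> simp [mulVec_diagonal, coherenceMask, decayVec]
  refine OrthogonalIdempotents.pair_iff.mpr
    ⟨hP, hmask.map (diagonalRingHom (Fin 9) ℝ), ?_, ?_⟩
  · rw [decayProj, coherenceProj, vecMulVec_mul, hPQ, vecMulVec_zero]
  · rw [decayProj, coherenceProj, mul_vecMulVec, hQP, zero_vecMulVec]

theorem laserL_eq_smul_add_smul (γ₁ γ₂ : ℝ) (hs : γ₁ + γ₂ ≠ 0) :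
    laserL γ₁ γ₂ = -(γ₁ + γ₂) • decayProj γ₁ γ₂ + -(1/2 * (γ₁ + γ₂)) • coherenceProj := by
  ext i j
  simp only [laserL, decayProj, coherenceProj, Matrix.add_apply, Matrix.smul_apply,
    vecMulVec_apply, diagonal_apply, of_apply]
  fin_cases i <;> fin_cases j <;> simp [decayVec, coherenceMask] <;> field_simp <;> ring

theorem exp_smul_laserL (γ₁ γ₂ t : ℝ) (hs : γ₁ + γ₂ ≠ 0) :
    exp (t • laserL γ₁ γ₂) = 1 + (Real.exp (-(γ₁ + γ₂) * t) - 1) • decayProj γ₁ γ₂ +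
      (Real.exp (-(1/2) * (γ₁ + γ₂) * t) - 1) • coherenceProj := by
  have hL : t • laserL γ₁ γ₂ = ∑ i, ![-(γ₁ + γ₂) * t, -(1/2) * (γ₁ + γ₂) * t] i •
      ![decayProj γ₁ γ₂, coherenceProj] i := by
    rw [laserL_eq_smul_add_smul γ₁ γ₂ hs, Fin.sum_univ_two]
    simp only [Matrix.cons_val_zero, Matrix.cons_val_one]
    module
  -- `exp` does not depend on the norm, so any submultiplicative matrix norm will do.
  let _ : NormedRing (Matrix (Fin 9) (Fin 9) ℝ) := Matrix.linftyOpNormedRing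
  let _ : NormedAlgebra ℝ (Matrix (Fin 9) (Fin 9) ℝ) := Matrix.linftyOpNormedAlgebra
  rw [hL]
  exact ((orthogonalIdempotents_decayProj_coherenceProj γ₁ γ₂).exp_sum_smul _).trans
    (by rw [Fin.sum_univ_two, add_assoc]; rfl)

end Laser

theorem stmt18 (γ₁ γ₂ t : ℝ) (h₁ : 0 < γ₁) (h₂ : 0 < γ₂) :
    NormedSpace.exp (t • laserL γ₁ γ₂) = Matrix.of fun i j =>
      if i = 0 ∧ j = 4 then γ₁ / (γ₁ + γ₂) * (1 - Real.exp (-(γ₁ + γ₂) * t))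
      else if i = 8 ∧ j = 4 then γ₂ / (γ₁ + γ₂) * (1 - Real.exp (-(γ₁ + γ₂) * t))
      else if i = 4 ∧ j = 4 then Real.exp (-(γ₁ + γ₂) * t)
      else if i = j ∧ (i = 1 ∨ i = 3 ∨ i = 5 ∨ i = 7) then
        Real.exp (-(1/2) * (γ₁ + γ₂) * t)
      else if i = j then 1
      else 0 := by
  rw [Laser.exp_smul_laserL γ₁ γ₂ t (by positivity)]
  ext i j
  simp only [Laser.decayProj, Laser.coherenceProj, Matrix.add_apply, Matrix.smul_apply, vecMulVec_apply,
    diagonal_apply, one_apply, of_apply]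
  fin_cases i <;> fin_cases j <;> simp [Laser.decayVec, Laser.coherenceMask] <;> ring
end
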